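/- Let g, h : [0, 1) → ℝ be functions in 𝒯 and suppose there exists δ > 0 such that g(t) + δ ≤ h(t) for all t ∈ [0, 1). Then ∫₀¹ g(t) dt + 1 ≤ ∫₀¹ h(t) dt. -/

import Mathlib

noncomputable section

open MeasureTheory intervalIntegral

/-- The abelian group `𝒯` of functions generated by `t ↦ fract (t - a)` and
`t ↦ 1 - fract (t - a)` for `a ∈ [0, 1)`, realized as an additive subgroup of `ℝ → ℝ`
(all its elements are periodic with period 1, hence determined by their values on `[0, 1)`). -/
def calT : AddSubgroup (ℝ → ℝ) :=
  AddSubgroup.closure {f : ℝ → ℝ | ∃ a ∈ Set.Ico (0:ℝ) 1,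
    f = (fun t => Int.fract (t - a)) ∨ f = (fun t => 1 - Int.fract (t - a))}


/-- bounded measurable functions are interval integrable -/
lemma bddIntegrable {f : ℝ → ℝ} (hm : Measurable f) {C : ℝ}
    (hC : ∀ t, |f t| ≤ C) (a b : ℝ) : IntervalIntegrable f volume a b := by
  refine (_root_.intervalIntegrable_const (c := C)).mono_fun
    hm.aestronglyMeasurable (ae_of_all _ fun t => ?_)
  have h := hC t
  have h0 : 0 ≤ C := le_trans (abs_nonneg _) h
  simp only [Real.norm_eq_abs, abs_of_nonneg h0]
  exact h

lemma fract_per : Function.Periodic Int.fract (1 : ℝ) := fun x => Int.fract_add_one x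

lemma fract_intInt (a b : ℝ) : IntervalIntegrable Int.fract volume a b :=
  bddIntegrable measurable_fract (C := 1)
    (fun t => by
      rw [abs_of_nonneg (Int.fract_nonneg t)]
      exact (Int.fract_lt_one t).le) a b

lemma integral_fract_base : (∫ t in (0:ℝ)..1, Int.fract t) = 1/2 := by
  have h0 : ∀ᵐ (x : ℝ) ∂volume, x ≠ 1 := by
    rw [MeasureTheory.ae_iff]
    simpa using measure_singleton (1 : ℝ)
  have h1 : (∫ t in (0:ℝ)..1, Int.fract t) = ∫ t in (0:ℝ)..1, t := by
    apply intervalIntegral.integral_congr_ae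
    filter_upwards [h0] with x hx hxI
    rw [Set.uIoc_of_le (by norm_num : (0:ℝ) ≤ 1)] at hxI
    exact Int.fract_eq_self.mpr ⟨hxI.1.le, lt_of_le_of_ne hxI.2 hx⟩
  rw [h1, integral_id]
  norm_num

/-- Key computation: for nonzero integer slope, the sawtooth integrates to 1/2. -/
lemma integral_fract (s : ℤ) (hs : s ≠ 0) (β : ℝ) :
    (∫ t in (0:ℝ)..1, Int.fract ((s : ℝ) * t + β)) = 1/2 := by
  have hs' : (s : ℝ) ≠ 0 := Int.cast_ne_zero.mpr hs
  rw [intervalIntegral.integral_comp_mul_add Int.fract hs' β]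
  have h2 : ((s:ℝ) * 0 + β) = β := by ring
  have h3 : ((s:ℝ) * 1 + β) = β + (s : ℤ) • (1:ℝ) := by
    rw [zsmul_eq_mul]; push_cast; ring
  rw [h2, h3, fract_per.intervalIntegral_add_zsmul_eq s β fract_intInt,
    fract_per.intervalIntegral_add_eq β 0]
  rw [zero_add, integral_fract_base]
  rw [smul_eq_mul, zsmul_eq_mul]
  field_simp

def goodT (f : ℝ → ℝ) : Prop :=
  ∃ s M : ℤ, ∃ β : ℝ,
    (∀ a b : ℝ, IntervalIntegrable f volume a b) ∧
    Function.Periodic f 1 ∧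
    (∀ t : ℝ, ∃ k : ℤ, f t = s * t + β + k) ∧
    (∫ t in (0:ℝ)..1, f t) = (s : ℝ) / 2 + M

lemma goodT_of_mem {f : ℝ → ℝ} (hf : f ∈ calT) : goodT f := by
  refine AddSubgroup.closure_induction ?_ ?_ ?_ ?_ hf
  · rintro x ⟨a, _, hx | hx⟩ <;> subst hx
    · refine ⟨1, 0, -a, fun u v => ?_, fun t => ?_, fun t => ?_, ?_⟩
      · exact bddIntegrable (measurable_fract.comp (measurable_id.sub measurable_const))
          (C := 1) (fun t => by
            rw [abs_of_nonneg (Int.fract_nonneg _)]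
            exact (Int.fract_lt_one _).le) u v
      · show Int.fract (t + 1 - a) = Int.fract (t - a)
        rw [show t + 1 - a = (t - a) + 1 by ring, Int.fract_add_one]
      · exact ⟨-⌊t - a⌋, by
          show Int.fract (t - a) = _
          rw [Int.fract]
          push_cast
          ring⟩
      · have := integral_fract 1 one_ne_zero (-a)
        simp only [Int.cast_one, one_mul] at this
        rw [show (fun t => Int.fract (t - a)) = (fun t : ℝ => Int.fract (t + -a)) by
          funext t; rw [sub_eq_add_neg]]
        show (∫ t in (0:ℝ)..1, Int.fract (t + -a)) = _
        rw [this]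
        norm_num
    · refine ⟨-1, 1, 1 + a, fun u v => ?_, fun t => ?_, fun t => ?_, ?_⟩
      · exact bddIntegrable
          (measurable_const.sub (measurable_fract.comp (measurable_id.sub measurable_const)))
          (C := 1) (fun t => by
            show |1 - Int.fract (t - a)| ≤ 1
            rw [abs_of_nonneg (by linarith [Int.fract_lt_one (t - a)])]
            linarith [Int.fract_nonneg (t - a)]) u v
      · show 1 - Int.fract (t + 1 - a) = 1 - Int.fract (t - a)
        rw [show t + 1 - a = (t - a) + 1 by ring, Int.fract_add_one]
      · exact ⟨⌊t - a⌋, by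
          show 1 - Int.fract (t - a) = _
          rw [Int.fract]
          push_cast
          ring⟩
      · have h1 := integral_fract 1 one_ne_zero (-a)
        simp only [Int.cast_one, one_mul] at h1
        have h2 : (∫ t in (0:ℝ)..1, (1 - Int.fract (t - a)))
            = (∫ t in (0:ℝ)..1, (1:ℝ)) - ∫ t in (0:ℝ)..1, Int.fract (t - a) := by
          apply intervalIntegral.integral_sub intervalIntegrable_const
          exact bddIntegrable (measurable_fract.comp (measurable_id.sub measurable_const))
            (C := 1) (fun t => by
              rw [abs_of_nonneg (Int.fract_nonneg _)]
              exact (Int.fract_lt_one _).le) 0 1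
        have h3 : (∫ t in (0:ℝ)..1, Int.fract (t - a)) = 1/2 := by
          simp only [sub_eq_add_neg]
          exact h1
        show (∫ t in (0:ℝ)..1, (1 - Int.fract (t - a))) = _
        rw [h2, h3]
        simp
        norm_num
  · exact ⟨0, 0, 0, fun u v => by
        exact (_root_.intervalIntegrable_const (c := (0:ℝ)) (a := u) (b := v)),
      fun t => rfl, fun t => ⟨0, by simp⟩, by simp⟩
  · rintro x y - - ⟨s₁, M₁, β₁, hi₁, hp₁, hk₁, hv₁⟩ ⟨s₂, M₂, β₂, hi₂, hp₂, hk₂, hv₂⟩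
    refine ⟨s₁ + s₂, M₁ + M₂, β₁ + β₂, fun u v => (hi₁ u v).add (hi₂ u v),
      fun t => ?_, fun t => ?_, ?_⟩
    · show x (t + 1) + y (t + 1) = x t + y t
      rw [hp₁ t, hp₂ t]
    · obtain ⟨k₁, e₁⟩ := hk₁ t
      obtain ⟨k₂, e₂⟩ := hk₂ t
      exact ⟨k₁ + k₂, by
        show x t + y t = _
        rw [e₁, e₂]; push_cast; ring⟩
    · show (∫ t in (0:ℝ)..1, (x t + y t)) = _
      rw [intervalIntegral.integral_add (hi₁ 0 1) (hi₂ 0 1), hv₁, hv₂]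
      push_cast; ring
  · rintro x - ⟨s₁, M₁, β₁, hi₁, hp₁, hk₁, hv₁⟩
    refine ⟨-s₁, -M₁, -β₁, fun u v => (hi₁ u v).neg,
      fun t => ?_, fun t => ?_, ?_⟩
    · show -x (t + 1) = -x t
      rw [hp₁ t]
    · obtain ⟨k₁, e₁⟩ := hk₁ t
      exact ⟨-k₁, by
        show -x t = _
        rw [e₁]; push_cast; ring⟩
    · show (∫ t in (0:ℝ)..1, -(x t)) = _
      rw [intervalIntegral.integral_neg, hv₁]
      push_cast; ring

/-- If g, h ∈ 𝒯 and g + δ ≤ h on [0,1) for some δ > 0, then ∫g + 1 ≤ ∫h. -/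
theorem statement15 (g h : ℝ → ℝ) (hg : g ∈ calT) (hh : h ∈ calT)
    (hle : ∃ δ : ℝ, 0 < δ ∧ ∀ t ∈ Set.Ico (0:ℝ) 1, g t + δ ≤ h t) :
    (∫ t in (0:ℝ)..1, g t) + 1 ≤ ∫ t in (0:ℝ)..1, h t := by
  obtain ⟨δ, hδ, hgh⟩ := hle
  obtain ⟨_, _, _, hgi, _, _, _⟩ := goodT_of_mem hg
  obtain ⟨_, _, _, hhi, _, _, _⟩ := goodT_of_mem hh
  obtain ⟨s, M, β, hInt, hPer, hStr, hIval⟩ := goodT_of_mem (sub_mem hh hg)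
  set f : ℝ → ℝ := h - g with hf
  have hfapp : ∀ t, f t = h t - g t := fun t => rfl
  have hfδ : ∀ t : ℝ, δ ≤ f t := by
    intro t
    have h1 : f (Int.fract t) = f t := by
      have h2 := hPer.sub_int_mul_eq (x := t) (n := ⌊t⌋)
      rw [← h2]
      congr 1
      rw [Int.fract]
      ring
    have h2 := hgh (Int.fract t) ⟨Int.fract_nonneg t, Int.fract_lt_one t⟩
    rw [← h1, hfapp]
    linarith
  have hint01 : IntervalIntegrable f volume 0 1 := hInt 0 1
  have hδint : δ ≤ ∫ t in (0:ℝ)..1, f t := by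
    calc δ = ∫ _ in (0:ℝ)..1, δ := by simp
    _ ≤ _ := intervalIntegral.integral_mono_on (by norm_num)
        intervalIntegrable_const hint01 (fun t _ => hfδ t)
  have hsplit : (∫ t in (0:ℝ)..1, f t)
      = (∫ t in (0:ℝ)..1, h t) - ∫ t in (0:ℝ)..1, g t := by
    have e : (∫ t in (0:ℝ)..1, f t) = ∫ t in (0:ℝ)..1, (h t - g t) := by
      simp only [hf, Pi.sub_apply]
    rw [e, intervalIntegral.integral_sub (hhi 0 1) (hgi 0 1)]
  suffices hs1 : 1 ≤ ∫ t in (0:ℝ)..1, f t by linarith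
  by_cases hs : s = 0
  · subst hs
    norm_num at hIval
    have h1 : (0:ℝ) < M := lt_of_lt_of_le hδ (hIval ▸ hδint)
    have h2 : (1:ℤ) ≤ M := by exact_mod_cast h1
    rw [hIval]
    exact_mod_cast h2
  · have hsR : (s:ℝ) ≠ 0 := Int.cast_ne_zero.mpr hs
    set c : ℝ := -2 * β / (s:ℝ) with hcdef
    have hc : (s:ℝ) * c + 2*β = 0 := by
      rw [hcdef]; field_simp; ring
    set F : ℝ → ℝ := fun t => f t + f (c - t) with hFdef
    have hF2δ : ∀ t, 2*δ ≤ F t := fun t => by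
      have h1 := hfδ t; have h2 := hfδ (c - t)
      simp only [hFdef]; linarith
    have hFk : ∀ t, ∃ n : ℤ, F t = n := by
      intro t
      obtain ⟨k₁, e₁⟩ := hStr t
      obtain ⟨k₂, e₂⟩ := hStr (c - t)
      refine ⟨k₁ + k₂, ?_⟩
      simp only [hFdef]
      rw [e₁, e₂]
      push_cast
      linear_combination hc
    have hF1 : ∀ t, (1:ℝ) ≤ F t := by
      intro t
      obtain ⟨n, hn⟩ := hFk t
      have hpos : (0:ℝ) < (n:ℝ) := by rw [← hn]; linarith [hF2δ t]
      have h1 : (1:ℤ) ≤ n := by exact_mod_cast hpos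
      rw [hn]; exact_mod_cast h1
    have hFci : IntervalIntegrable (fun t => f (c - t)) volume 0 1 := by
      have := (hInt c (c - 1)).comp_sub_left c
      simpa using this
    have hFint : IntervalIntegrable F volume 0 1 := hint01.add hFci
    have hrefl : (∫ t in (0:ℝ)..1, f (c - t)) = ∫ t in (0:ℝ)..1, f t := by
      rw [intervalIntegral.integral_comp_sub_left f c]
      have e2 : (∫ x in (c-1:ℝ)..(c-1)+1, f x) = ∫ x in (0:ℝ)..0+1, f x :=
        hPer.intervalIntegral_add_eq (c-1) 0
      rw [show (c - 0 : ℝ) = (c-1) + 1 by ring]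
      simpa using e2
    have hFval : (∫ t in (0:ℝ)..1, F t) = (s:ℝ) + 2 * M := by
      have e : (∫ t in (0:ℝ)..1, F t)
          = (∫ t in (0:ℝ)..1, f t) + ∫ t in (0:ℝ)..1, f (c - t) :=
        intervalIntegral.integral_add hint01 hFci
      rw [e, hrefl, hIval]; ring
    have hge1 : (1:ℝ) ≤ (s:ℝ) + 2*M := by
      rw [← hFval]
      calc (1:ℝ) = ∫ _ in (0:ℝ)..1, (1:ℝ) := by simp
      _ ≤ _ := intervalIntegral.integral_mono_on (by norm_num)
          intervalIntegrable_const hFint (fun t _ => hF1 t)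
    have hge1' : (1:ℤ) ≤ s + 2*M := by exact_mod_cast hge1
    by_cases h2 : 2 ≤ s + 2*M
    · rw [hIval]
      have h3 : (2:ℝ) ≤ (s:ℝ) + 2*M := by exact_mod_cast h2
      linarith
    · exfalso
      have heq : s + 2*M = 1 := by omega
      have heqR : (s:ℝ) + 2*M = 1 := by exact_mod_cast heq
      have hzero : (∫ t in (0:ℝ)..1, (F t - 1)) = 0 := by
        rw [intervalIntegral.integral_sub hFint intervalIntegrable_const, hFval]
        simp [heqR]
      have hae : (fun t => F t - 1) =ᵐ[volume.restrict (Set.Ioc (0:ℝ) 1)] 0 := by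
        refine (intervalIntegral.integral_eq_zero_iff_of_le_of_nonneg_ae (by norm_num)
          (ae_of_all _ (fun t => ?_)) (hFint.sub intervalIntegrable_const)).mp hzero
        have := hF1 t
        simp only [Pi.zero_apply]
        linarith
      have hup : ∀ᵐ t ∂(volume.restrict (Set.Ioc (0:ℝ) 1)), f t ≤ 1 - δ := by
        filter_upwards [hae] with t ht
        have hFt : F t = 1 := by
          have : F t - 1 = 0 := by simpa using ht
          linarith
        have h4 := hfδ (c - t)
        simp only [hFdef] at hFt
        linarith
      have hkey : ∀ᵐ t ∂(volume.restrict (Set.Ioc (0:ℝ) 1)),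
          Int.fract ((s:ℝ) * t + (β - δ)) = f t - δ := by
        filter_upwards [hup] with t ht
        obtain ⟨k, hk⟩ := hStr t
        have e : f t - δ = ((s:ℝ)*t + (β - δ)) + (k:ℝ) := by rw [hk]; ring
        have e2 : Int.fract (f t - δ) = Int.fract ((s:ℝ)*t + (β - δ)) := by
          rw [e, Int.fract_add_intCast]
        rw [← e2, Int.fract_eq_self.mpr ⟨by linarith [hfδ t], by linarith⟩]
      have hIeq : (∫ t in (0:ℝ)..1, Int.fract ((s:ℝ)*t + (β - δ)))
          = ∫ t in (0:ℝ)..1, (f t - δ) := by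
        apply intervalIntegral.integral_congr_ae'
        · exact (ae_restrict_iff' measurableSet_Ioc).mp hkey
        · exact ae_of_all _ (fun x hx => absurd hx (by simp))
      have hL := integral_fract s hs (β - δ)
      have hR : (∫ t in (0:ℝ)..1, (f t - δ)) = ((s:ℝ)/2 + M) - δ := by
        rw [intervalIntegral.integral_sub hint01 intervalIntegrable_const, hIval]
        simp
      rw [hL, hR] at hIeq
      linarith
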